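/- arXiv:2511.17224 — 6 statements merged into one kernel-verified Lean document; each statement's English description precedes it below -/
import Mathlib

section
/- Let H be a graph that is 3-colorable and contains no cycle of length divisible by 3. Then in every proper 3-coloring of H, there exists a vertex all of whose neighbors receive the same color. -/
/-- Walk following iterates of a function whose steps are edges. -/
def iterWalk {V : Type*} {H : SimpleGraph V} {f : V → V}
    (hf : ∀ v, H.Adj v (f v)) : ∀ (n : ℕ) (v : V), H.Walk v (f^[n] v)
  | 0, _ => SimpleGraph.Walk.nil
  | n + 1, v => SimpleGraph.Walk.cons (hf v) (iterWalk hf n (f v))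

theorem iterWalk_length {V : Type*} {H : SimpleGraph V} {f : V → V}
    (hf : ∀ v, H.Adj v (f v)) (n : ℕ) (v : V) : (iterWalk hf n v).length = n := by
  induction n generalizing v with
  | zero => rfl
  | succ n ih => simp [iterWalk, ih]

theorem iterWalk_support {V : Type*} {H : SimpleGraph V} {f : V → V}
    (hf : ∀ v, H.Adj v (f v)) (n : ℕ) (v : V) :
    (iterWalk hf n v).support = (List.range (n + 1)).map (fun i => f^[i] v) := by
  induction n generalizing v with
  | zero => rfl
  | succ n ih =>
      have h1 : (List.range (n + 1 + 1)).map (fun i => f^[i] v) =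
          v :: (List.range (n + 1)).map (fun i => f^[i] (f v)) := by
        rw [List.range_succ_eq_map, List.map_cons, List.map_map]
        refine congrArg₂ List.cons rfl ?_
        congr 1
      show (SimpleGraph.Walk.cons (hf v) (iterWalk hf n (f v))).support = _
      rw [SimpleGraph.Walk.support_cons, ih, h1]

theorem iterWalk_edges {V : Type*} {H : SimpleGraph V} {f : V → V}
    (hf : ∀ v, H.Adj v (f v)) (n : ℕ) (v : V) :
    (iterWalk hf n v).edges = (List.range n).map (fun i => s(f^[i] v, f^[i+1] v)) := by
  induction n generalizing v with
  | zero => rfl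
  | succ n ih =>
      have h1 : (List.range (n + 1)).map (fun i => s(f^[i] v, f^[i+1] v)) =
          s(v, f v) :: (List.range n).map (fun i => s(f^[i] (f v), f^[i+1] (f v))) := by
        rw [List.range_succ_eq_map, List.map_cons, List.map_map]
        refine congrArg₂ List.cons rfl ?_
        congr 1
      show (SimpleGraph.Walk.cons (hf v) (iterWalk hf n (f v))).edges = _
      rw [SimpleGraph.Walk.edges_cons, ih, h1]

/-- If `H` is 3-colorable (witnessed by quantifying over proper 3-colorings) and contains no
cycle of length divisible by 3, then every proper 3-coloring of `H` has a vertex all of whose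
neighbors receive the same color. -/
theorem stmt0 {V : Type*} [Fintype V] [Nonempty V] (H : SimpleGraph V)
    (hcyc : ∀ (v : V) (w : H.Walk v v), w.IsCycle → ¬ (3 ∣ w.length))
    (c : V → Fin 3) (hc : ∀ u v, H.Adj u v → c u ≠ c v) :
    ∃ v : V, ∀ u w : V, H.Adj v u → H.Adj v w → c u = c w := by
  classical
  by_contra hcon
  push_neg at hcon
  -- every vertex has a neighbor of color c v + 1
  have hstep : ∀ v : V, ∃ u, H.Adj v u ∧ c u = c v + 1 := by
    intro v
    obtain ⟨u, w, hu, hw, huw⟩ := hcon v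
    have h1 : c u ≠ c v := fun h => hc v u hu h.symm
    have h2 : c w ≠ c v := fun h => hc v w hw h.symm
    have : c u = c v + 1 ∨ c w = c v + 1 := by
      revert h1 h2 huw
      generalize c u = a; generalize c w = b; generalize c v = d
      revert a b d; decide
    rcases this with h | h
    · exact ⟨u, hu, h⟩
    · exact ⟨w, hw, h⟩
  choose f hf hfc using hstep
  -- colors along iterates
  open Fin.NatCast Fin.CommRing in
  have hcol : ∀ (n : ℕ) (v : V), c (f^[n] v) = c v + (n : Fin 3) := by
    intro n v
    induction n with
    | zero => simp
    | succ n ih =>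
        rw [Function.iterate_succ_apply', hfc, ih]
        push_cast
        ring
  -- find a periodic point
  obtain ⟨v0⟩ := ‹Nonempty V›
  obtain ⟨a, b, hne, hab⟩ :=
    Finite.exists_ne_map_eq_of_infinite (fun n : ℕ => f^[n] v0)
  wlog hlt : a < b generalizing a b
  · exact this b a hne.symm hab.symm (by omega)
  obtain ⟨x, n0, hn0pos, hfix0⟩ : ∃ (x : V) (n : ℕ), 0 < n ∧ f^[n] x = x :=
    ⟨f^[a] v0, b - a, by omega, by
      rw [← Function.iterate_add_apply, show b - a + a = b by omega]; exact hab.symm⟩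
  have hper : ∃ n, 0 < n ∧ f^[n] x = x := ⟨n0, hn0pos, hfix0⟩
  set k := Nat.find hper with hk
  obtain ⟨hkpos, hkfix⟩ : 0 < k ∧ f^[k] x = x := Nat.find_spec hper
  -- distinctness below k
  have hdist : ∀ i j, i < k → j < k → f^[i] x = f^[j] x → i = j := by
    have key : ∀ i j, i < j → j < k → f^[i] x ≠ f^[j] x := by
      intro i j hij hjk heq
      have h2 : f^[k - j + i] x = x := by
        have h3 := congrArg (f^[k - j]) heq
        rw [← Function.iterate_add_apply, ← Function.iterate_add_apply] at h3
        rw [show k - j + j = k by omega, hkfix] at h3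
        exact h3
      exact Nat.find_min hper (m := k - j + i) (by omega) ⟨by omega, h2⟩
    intro i j hik hjk heq
    rcases lt_trichotomy i j with h | h | h
    · exact absurd heq (key i j h hjk)
    · exact h
    · exact absurd heq.symm (key j i h hik)
  -- 3 ∣ k
  have h3k : 3 ∣ k := by
    have h := hcol k x
    rw [hkfix] at h
    exact Fin.natCast_eq_zero.mp (left_eq_add.mp h)
  have hk3 : 3 ≤ k := Nat.le_of_dvd hkpos h3k
  -- injectivity on [1, k]
  have hinj : ∀ i j, 1 ≤ i → i ≤ k → 1 ≤ j → j ≤ k → f^[i] x = f^[j] x → i = j := by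
    intro i j hi1 hik hj1 hjk heq
    rcases eq_or_lt_of_le hik with h | h <;> rcases eq_or_lt_of_le hjk with h' | h'
    · omega
    · exfalso
      rw [h, hkfix] at heq
      have := hdist 0 j (by omega) h' heq
      omega
    · exfalso
      rw [h', hkfix] at heq
      have := hdist i 0 h (by omega) heq
      omega
    · exact hdist i j h h' heq
  -- the cycle
  have hx1 : f^[k-1] (f x) = x := by
    have h := Function.iterate_succ_apply f (k-1) x
    rw [Nat.succ_eq_add_one, show k - 1 + 1 = k by omega, hkfix] at h
    exact h.symm
  set P : H.Walk (f x) x := (iterWalk hf (k-1) (f x)).copy rfl hx1 with hP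
  have hPsupp : P.support = (List.range k).map (fun i => f^[i+1] x) := by
    rw [hP, SimpleGraph.Walk.support_copy, iterWalk_support, show k - 1 + 1 = k by omega]
    congr 1
  have hPpath : P.IsPath := by
    rw [SimpleGraph.Walk.isPath_def, hPsupp]
    refine List.Nodup.map_on ?_ List.nodup_range
    intro i hi j hj heq
    rw [List.mem_range] at hi hj
    have := hinj (i+1) (j+1) (by omega) (by omega) (by omega) (by omega) heq
    omega
  have hPedge : s(x, f x) ∉ P.edges := by
    rw [hP, SimpleGraph.Walk.edges_copy, iterWalk_edges]
    intro hmem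
    rw [List.mem_map] at hmem
    obtain ⟨i, hi, hsym⟩ := hmem
    rw [List.mem_range] at hi
    rw [← Function.iterate_succ_apply f i x, ← Function.iterate_succ_apply f (i+1) x,
      Sym2.eq_iff] at hsym
    rcases hsym with ⟨h1, h2⟩ | ⟨h1, h2⟩
    · have : i + 1 = 0 := hdist (i+1) 0 (by omega) (by omega) h1
      omega
    · -- f^[i+1] x = f x and f^[i+2] x = x
      rcases eq_or_lt_of_le (show i + 2 ≤ k by omega) with h | h
      · have := hinj (i+1) 1 (by omega) (by omega) (by omega) (by omega) h1
        omega
      · have : i + 2 = 0 := hdist (i+2) 0 (by omega) (by omega) h2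
        omega
  have hcycle : (SimpleGraph.Walk.cons (hf x) P).IsCycle :=
    (SimpleGraph.Walk.cons_isCycle_iff P (hf x)).mpr ⟨hPpath, hPedge⟩
  refine hcyc x (SimpleGraph.Walk.cons (hf x) P) hcycle ?_
  rw [SimpleGraph.Walk.length_cons, hP, SimpleGraph.Walk.length_copy, iterWalk_length,
    show k - 1 + 1 = k by omega]
  exact h3k
end

section
/- For every k ≥ 2, the cycle C_{2k+1} of odd length 2k+1 admits a proper 3-coloring in which some vertex has a monochromatic neighborhood, and moreover, repeatedly deleting vertices with monochromatic neighborhoods reduces the cycle to the empty graph. -/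
/-!
Number the vertices of `C_{2k+1}` by `0, …, 2k`. Colour `0` and `2k - 1` with `0`, colour `2k`
and the other odd vertices with `1`, and the remaining even vertices with `2`; since `k ≥ 2` this
is proper, and both neighbours `1` and `2k` of `0` get colour `1`. So `0` can be deleted first.
After that the remaining graph is the path `1, …, 2k`, and deleting `1, 2, …, 2k` in this order
always removes an end of the current path, which has at most one neighbour left.
-/

namespace SimpleGraph

theorem cycleGraph_adj_iff_val {n : ℕ} (hn : n ≠ 1) {u v : Fin n} :
    (cycleGraph n).Adj u v ↔ u.val + 1 = v.val ∨ v.val + 1 = u.val ∨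
      (u.val = 0 ∧ v.val + 1 = n) ∨ (v.val = 0 ∧ u.val + 1 = n) := by
  have hu := u.isLt
  have hv := v.isLt
  rw [cycleGraph_adj']
  rcases lt_trichotomy u v with h | rfl | h
  · rw [Fin.coe_sub_iff_lt.mpr h, Fin.coe_sub_iff_le.mpr h.le]
    omega
  · rw [Fin.coe_sub_iff_le.mpr le_rfl]
    omega
  · rw [Fin.coe_sub_iff_le.mpr h.le, Fin.coe_sub_iff_lt.mpr h]
    omega

theorem val_eq_succ_of_cycleGraph_adj_of_le {n : ℕ} {i u : Fin n} (hi : i.val ≠ 0)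
    (hiu : i ≤ u) (h : (cycleGraph n).Adj i u) : u.val = i.val + 1 := by
  have := i.isLt
  rw [cycleGraph_adj_iff_val (by omega)] at h
  rw [Fin.le_def] at hiu
  omega

theorem cycleGraph_adj_zero_iff {n : ℕ} (hn : n ≠ 0) {u : Fin (n + 1)} :
    (cycleGraph (n + 1)).Adj 0 u ↔ u.val = 1 ∨ u.val = n := by
  rw [cycleGraph_adj_iff_val (by omega), Fin.val_zero]
  omega

theorem cycleGraph_monochromatic_later_neighbors {n : ℕ} {α : Type*} {c : Fin (n + 1) → α}
    (h₀ : ∀ u w, (cycleGraph (n + 1)).Adj 0 u → (cycleGraph (n + 1)).Adj 0 w → c u = c w)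
    (i u w : Fin (n + 1)) (hiu : i ≤ u) (hiw : i ≤ w)
    (hu : (cycleGraph (n + 1)).Adj i u) (hw : (cycleGraph (n + 1)).Adj i w) : c u = c w := by
  by_cases hi : i.val = 0
  · obtain rfl : i = 0 := Fin.ext hi
    exact h₀ u w hu hw
  · have huw : u = w := Fin.ext <| (val_eq_succ_of_cycleGraph_adj_of_le hi hiu hu).trans
      (val_eq_succ_of_cycleGraph_adj_of_le hi hiw hw).symm
    rw [huw]

end SimpleGraph

open SimpleGraph

def oddCycleColoring (k : ℕ) (i : Fin (2 * k + 1)) : Fin 3 :=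
  if i.val = 0 ∨ i.val = 2 * k - 1 then 0
  else if i.val % 2 = 1 ∨ i.val = 2 * k then 1
  else 2

theorem oddCycleColoring_ne_of_adj {k : ℕ} (hk : 2 ≤ k) {u v : Fin (2 * k + 1)}
    (h : (cycleGraph (2 * k + 1)).Adj u v) : oddCycleColoring k u ≠ oddCycleColoring k v := by
  rw [cycleGraph_adj_iff_val (by omega)] at h
  unfold oddCycleColoring
  split_ifs <;> first | decide | omega

theorem oddCycleColoring_adj_zero {k : ℕ} (hk : 2 ≤ k) (u w : Fin (2 * k + 1))
    (hu : (cycleGraph (2 * k + 1)).Adj 0 u) (hw : (cycleGraph (2 * k + 1)).Adj 0 w) :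
    oddCycleColoring k u = oddCycleColoring k w := by
  rw [cycleGraph_adj_zero_iff (by omega)] at hu hw
  unfold oddCycleColoring
  split_ifs <;> first | rfl | omega

/-- For `k ≥ 2`, the odd cycle `C_{2k+1}` admits a proper 3-coloring with a vertex having a
monochromatic neighborhood, and moreover there is an elimination ordering deleting vertices
with monochromatic neighborhoods (in the remaining graph) reducing the cycle to the empty
graph. -/
theorem stmt2 (k : ℕ) (hk : 2 ≤ k) :
    ∃ c : Fin (2*k+1) → Fin 3,
      (∀ u v, (SimpleGraph.cycleGraph (2*k+1)).Adj u v → c u ≠ c v) ∧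
      (∃ v, ∀ u w, (SimpleGraph.cycleGraph (2*k+1)).Adj v u →
        (SimpleGraph.cycleGraph (2*k+1)).Adj v w → c u = c w) ∧
      ∃ e : Fin (2*k+1) ≃ Fin (2*k+1),
        ∀ i u w : Fin (2*k+1), i ≤ e.symm u → i ≤ e.symm w →
          (SimpleGraph.cycleGraph (2*k+1)).Adj (e i) u →
          (SimpleGraph.cycleGraph (2*k+1)).Adj (e i) w → c u = c w := by
  have h₀ := oddCycleColoring_adj_zero hk
  exact ⟨oddCycleColoring k, fun _ _ => oddCycleColoring_ne_of_adj hk, ⟨0, h₀⟩,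
    Equiv.refl _, cycleGraph_monochromatic_later_neighbors h₀⟩
end

section
/- Let G be a graph containing no cycle of odd length 2ℓ+1 for any ℓ with 2 ≤ ℓ ≤ k. Let v be a vertex and suppose xy is an edge of G with dist(v,x) = dist(v,y) = i where 1 ≤ i ≤ k. Then x and y have a common neighbor z with dist(v,z) = i − 1, so xyz is a triangle. -/
/-!
Let `u` be a vertex as far from `v` as possible that lies both on a geodesic from `v` to `x` and
on one from `v` to `y`. Geodesics from `u` to `x` and from `u` to `y` then meet only at `u`, since
any other common vertex would be such a vertex farther from `v`. Both have length
`ℓ = i - dist(v,u) ≥ 1`, so together with the edge `xy` they close up a cycle of length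
`2ℓ + 1 ≤ 2k + 1`. Hence `ℓ = 1`, and `u` is the required common neighbour.
-/

theorem exists_forall_le_of_bounded {α : Type*} {P : α → Prop} (f : α → ℕ) {n : ℕ} {a : α}
    (ha : P a) (hbound : ∀ b, P b → f b ≤ n) : ∃ a, P a ∧ ∀ b, P b → f b ≤ f a := by
  classical
  obtain ⟨a', ha', hfa'⟩ :=
    Nat.findGreatest_spec (P := fun d => ∃ b, P b ∧ f b = d) (hbound a ha) ⟨a, ha, rfl⟩
  exact ⟨a', ha', fun b hb => hfa' ▸ Nat.le_findGreatest (hbound b hb) ⟨b, hb, rfl⟩⟩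

namespace SimpleGraph

variable {V : Type*} {G : SimpleGraph V}

theorem Walk.dist_add_dist_of_mem_support {u v w : V} {p : G.Walk u v}
    (hp : p.length = G.dist u v) (hw : w ∈ p.support) :
    G.dist u w + G.dist w v = G.dist u v := by
  classical
  rw [← length_eq_dist_of_subwalk hp (p.isSubwalk_takeUntil hw),
    ← length_eq_dist_of_subwalk hp (p.isSubwalk_dropUntil hw), ← Walk.length_append,
    Walk.take_spec, hp]

theorem Reachable.of_dist_add_dist_eq {u v x : V} (h : G.dist v u + G.dist u x = G.dist v x)
    (hpos : G.dist v x ≠ 0) : G.Reachable u x := by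
  by_contra hux
  rw [dist_eq_zero_of_not_reachable hux, add_zero] at h
  exact hux ((Reachable.of_dist_ne_zero (h ▸ hpos)).symm.trans (Reachable.of_dist_ne_zero hpos))

theorem Walk.IsPath.isCycle_append_cons_reverse {u x y : V} {p : G.Walk u x} {q : G.Walk u y}
    (hp : p.IsPath) (hq : q.IsPath) (hpq : ∀ w ∈ p.support, w ∈ q.support → w = u)
    (hxy : G.Adj x y) (hxu : x ≠ u) (hyu : y ≠ u) :
    (p.append (Walk.cons hxy q.reverse)).IsCycle := by
  have hu_tail : u ∉ p.support.tail := by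
    have := hp.support_nodup
    rw [← Walk.cons_tail_support] at this
    exact (List.nodup_cons.mp this).1
  refine hp.isCycle_append ?_ ?_ ?_
  · rw [Walk.cons_isPath_iff, Walk.support_reverse, List.mem_reverse]
    exact ⟨hq.reverse, fun hx => hxu (hpq x p.end_mem_support hx)⟩
  · rw [Walk.support_cons, List.tail_cons, Walk.support_reverse]
    intro w hwp hwq
    exact hu_tail (hpq w (List.mem_of_mem_tail hwp) (List.mem_reverse.mp hwq) ▸ hwp)
  · right
    have : q.length ≠ 0 := fun h => hyu (Walk.eq_of_length_eq_zero h).symm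
    simp only [Walk.length_cons, Walk.length_reverse]
    omega

theorem Walk.eq_of_mem_support_of_mem_support_of_farthest {u v w x y : V}
    {p : G.Walk u x} {q : G.Walk u y}
    (hux : G.dist v u + G.dist u x = G.dist v x) (huy : G.dist v u + G.dist u y = G.dist v y)
    (hfarthest : ∀ w, G.dist v w + G.dist w x = G.dist v x ∧ G.dist v w + G.dist w y = G.dist v y →
      G.dist v w ≤ G.dist v u)
    (hp : p.length = G.dist u x) (hq : q.length = G.dist u y)
    (hwp : w ∈ p.support) (hwq : w ∈ q.support) : w = u := by
  classical
  have hpw := dist_add_dist_of_mem_support hp hwp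
  have hqw := dist_add_dist_of_mem_support hq hwq
  have hvw := (p.takeUntil w hwp).reachable.dist_triangle_right v
  have hvx := (p.dropUntil w hwp).reachable.dist_triangle_right v
  have := hfarthest w ⟨by omega, by omega⟩
  exact ((p.takeUntil w hwp).reachable.dist_eq_zero_iff.mp (by omega)).symm

end SimpleGraph

open SimpleGraph

/-- If `G` has no cycles of odd lengths `2ℓ+1` for `2 ≤ ℓ ≤ k`, and `xy` is an edge with
both endpoints at distance `i` from `v` (`1 ≤ i ≤ k`), then `x` and `y` have a common
neighbor `z` at distance `i - 1` from `v`, so `xyz` is a triangle. -/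
theorem stmt4 {V : Type*} (G : SimpleGraph V) (k : ℕ)
    (hfree : ∀ ℓ, 2 ≤ ℓ → ℓ ≤ k →
      ∀ (a : V) (w : G.Walk a a), w.IsCycle → w.length ≠ 2*ℓ+1)
    (v x y : V) (hxy : G.Adj x y) (i : ℕ) (hi1 : 1 ≤ i) (hik : i ≤ k)
    (hx : G.dist v x = i) (hy : G.dist v y = i) :
    ∃ z : V, G.Adj x z ∧ G.Adj y z ∧ G.dist v z = i - 1 := by
  obtain ⟨u, ⟨hux, huy⟩, hfarthest⟩ := exists_forall_le_of_bounded (G.dist v)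
    (P := fun u => G.dist v u + G.dist u x = G.dist v x ∧ G.dist v u + G.dist u y = G.dist v y)
    (a := v) (by simp) (fun _ h => h.1 ▸ Nat.le_add_right _ _)
  obtain ⟨p, hp, hp_len⟩ := (Reachable.of_dist_add_dist_eq hux (by omega)).exists_path_of_dist
  obtain ⟨q, hq, hq_len⟩ := (Reachable.of_dist_add_dist_eq huy (by omega)).exists_path_of_dist
  have hpq : ∀ w ∈ p.support, w ∈ q.support → w = u := fun _ =>
    Walk.eq_of_mem_support_of_mem_support_of_farthest hux huy hfarthest hp_len hq_len
  have hℓ : G.dist u y = G.dist u x := by omega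
  have hxu : x ≠ u := by
    rintro rfl
    exact hxy.ne (q.reachable.dist_eq_zero_iff.mp (by simpa using hℓ))
  have hyu : y ≠ u := by
    rintro rfl
    exact hxy.ne (p.reachable.dist_eq_zero_iff.mp (by simpa using hℓ.symm)).symm
  rcases (show G.dist u x = 1 ∨ 2 ≤ G.dist u x from by
    have := p.reachable.pos_dist_of_ne hxu.symm; omega) with hℓ1 | hℓ2
  · exact ⟨u, (dist_eq_one_iff_adj.mp hℓ1).symm, (dist_eq_one_iff_adj.mp (hℓ ▸ hℓ1)).symm,
      by omega⟩
  · refine absurd ?_ <|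
      hfree _ hℓ2 (by omega) u _ (hp.isCycle_append_cons_reverse hq hpq hxy hxu hyu)
    simp only [Walk.length_append, Walk.length_cons, Walk.length_reverse]
    omega
end

section
/- Let G be a graph whose vertex set is partitioned into parts A and B such that the induced subgraph G[A] is d-degenerate. Then the number of (unordered) triples {u, w, z} forming a triangle with u, w ∈ A and z ∈ V(G) is at most d · |E(A, V∖A)| + d² · |A|, and in particular every triangle of G with at least two vertices in A has one of its A-vertices with at most d neighbors in A under a degeneracy ordering. -/
/-!
Peeling off, one at a time, a vertex of degree at most `d` in what remains of `A` ranks `A` so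
that every `u ∈ A` has at most `d` neighbours in `A` of higher rank ("forward neighbours").
In a triangle with two vertices in `A`, let `u` be its lowest-ranked vertex in `A`; its other
vertices in `A` are forward neighbours of `u`. If the third vertex `z` lies outside `A`, the
triangle is determined by the cross edge `uz` and one forward neighbour of `u` (at most
`d · |E(A, V∖A)|` choices); otherwise by `u` and two of its forward neighbours (at most
`d² · |A|` choices).
-/

open Finset

namespace SimpleGraph

variable {V : Type*} (G : SimpleGraph V) [DecidableRel G.Adj]

def IsDegenerateOn (A : Finset V) (d : ℕ) : Prop :=
  ∀ B ⊆ A, B.Nonempty → ∃ v ∈ B, #(B.filter (G.Adj v)) ≤ d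

def forwardNeighborFinset (A : Finset V) (r : V → ℕ) (u : V) : Finset V :=
  A.filter fun x => G.Adj u x ∧ r u < r x

variable [DecidableEq V]

def crossTriangleCandidates [Fintype V] (A : Finset V) (r : V → ℕ) : Finset (Finset V) :=
  ((A ×ˢ Aᶜ).filter fun p => G.Adj p.1 p.2).biUnion fun p =>
    (G.forwardNeighborFinset A r p.1).image fun w => {p.1, w, p.2}

def innerTriangleCandidates (A : Finset V) (r : V → ℕ) : Finset (Finset V) :=
  A.biUnion fun u =>
    (G.forwardNeighborFinset A r u ×ˢ G.forwardNeighborFinset A r u).image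
      fun q => {u, q.1, q.2}

variable {G}

theorem IsDegenerateOn.exists_rank {A : Finset V} {d : ℕ} (h : G.IsDegenerateOn A d) :
    ∃ r : V → ℕ, Set.InjOn r A ∧ ∀ u ∈ A, #(G.forwardNeighborFinset A r u) ≤ d := by
  induction A using Finset.strongInduction with
  | H A ih =>
  rcases A.eq_empty_or_nonempty with rfl | hA
  · exact ⟨fun _ => 0, by simp, by simp⟩
  obtain ⟨v, hvA, hvd⟩ := h A subset_rfl hA
  obtain ⟨r, hr_inj, hr_fwd⟩ := ih _ (erase_ssubset hvA)
    fun B hB => h B (hB.trans (erase_subset v A))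
  refine ⟨fun x => if x = v then 0 else r x + 1, ?_, fun u hu => ?_⟩
  · intro u hu w hw huw
    by_cases hu' : u = v <;> by_cases hw' : w = v <;> simp only [hu', hw', if_true, if_false,
      Nat.add_right_cancel_iff, reduceCtorEq, Nat.succ_ne_zero] at huw ⊢
    exact hr_inj (by simpa [hu'] using hu) (by simpa [hw'] using hw) huw
  · by_cases hu' : u = v
    · subst hu'
      refine (card_le_card fun x hx => ?_).trans hvd
      simp only [forwardNeighborFinset, mem_filter] at hx ⊢
      exact ⟨hx.1, hx.2.1⟩
    · refine (card_le_card fun x hx => ?_).trans (hr_fwd u (mem_erase.2 ⟨hu', hu⟩))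
      by_cases hx' : x = v <;>
        simp_all [forwardNeighborFinset]

lemma exists_erase_subset_forwardNeighborFinset {A T : Finset V} {r : V → ℕ}
    (hr : Set.InjOn r A) (hTA : T ⊆ A) (hT : G.IsClique (T : Set V)) (hne : T.Nonempty) :
    ∃ u ∈ T, T.erase u ⊆ G.forwardNeighborFinset A r u := by
  obtain ⟨u, hu, hmin⟩ := T.exists_min_image r hne
  refine ⟨u, hu, fun x hx => ?_⟩
  obtain ⟨hxu, hxT⟩ := mem_erase.1 hx
  have hrx : r u ≠ r x := fun h => hxu (hr (hTA hu) (hTA hxT) h).symm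
  exact mem_filter.2 ⟨hTA hxT, hT hu hxT (Ne.symm hxu), (hmin x hxT).lt_of_ne hrx⟩

lemma mem_crossTriangleCandidates_union [Fintype V] {A s : Finset V} {r : V → ℕ}
    (hr : Set.InjOn r A) (hs : G.IsNClique 3 s) (hsA : 2 ≤ #(s ∩ A)) :
    s ∈ G.crossTriangleCandidates A r ∪ G.innerTriangleCandidates A r := by
  obtain ⟨u, hu, hfwd⟩ := exists_erase_subset_forwardNeighborFinset hr inter_subset_right
    (hs.1.subset inter_subset_left) (card_pos.1 (by omega))
  obtain ⟨hus, huA⟩ := mem_inter.1 hu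
  by_cases hsub : s ⊆ A
  · apply mem_union_right
    have hfwd' : s.erase u ⊆ G.forwardNeighborFinset A r u := by
      rwa [inter_eq_left.2 hsub] at hfwd
    obtain ⟨w, z, -, he⟩ := card_eq_two.1 (by rw [card_erase_of_mem hus, hs.2] : #(s.erase u) = 2)
    rw [← insert_erase hus, he]
    exact mem_biUnion.2 ⟨u, huA, mem_image.2
      ⟨(w, z), mem_product.2 ⟨hfwd' (by simp [he]), hfwd' (by simp [he])⟩, rfl⟩⟩
  · apply mem_union_left
    obtain ⟨z, hzs, hzA⟩ := not_subset.1 hsub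
    obtain ⟨w, hw⟩ : ((s ∩ A).erase u).Nonempty := by
      rw [← card_pos, card_erase_of_mem hu]; omega
    obtain ⟨hwu, hws, hwA⟩ : w ≠ u ∧ w ∈ s ∧ w ∈ A := by simpa using hw
    have huz : u ≠ z := by rintro rfl; exact hzA huA
    have hwz : w ≠ z := by rintro rfl; exact hzA hwA
    have hs_eq : {u, w, z} = s := eq_of_subset_of_card_le
      (by simp [insert_subset_iff, hus, hws, hzs])
      (by rw [hs.2, card_eq_three.2 ⟨u, w, z, hwu.symm, huz, hwz, rfl⟩])
    rw [← hs_eq]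
    exact mem_biUnion.2 ⟨(u, z), mem_filter.2 ⟨mem_product.2 ⟨huA, mem_compl.2 hzA⟩,
      hs.1 hus hzs huz⟩, mem_image.2 ⟨w, hfwd hw, rfl⟩⟩

variable {A : Finset V} {r : V → ℕ} {d : ℕ}

lemma card_crossTriangleCandidates_le [Fintype V]
    (hfwd : ∀ u ∈ A, #(G.forwardNeighborFinset A r u) ≤ d) :
    #(G.crossTriangleCandidates A r) ≤ d * #((A ×ˢ Aᶜ).filter fun p => G.Adj p.1 p.2) := by
  rw [mul_comm]
  refine card_biUnion_le_card_mul _ _ _ fun p hp => card_image_le.trans (hfwd p.1 ?_)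
  exact (mem_product.1 (mem_filter.1 hp).1).1

lemma card_innerTriangleCandidates_le
    (hfwd : ∀ u ∈ A, #(G.forwardNeighborFinset A r u) ≤ d) :
    #(G.innerTriangleCandidates A r) ≤ d ^ 2 * #A := by
  rw [mul_comm, sq]
  refine card_biUnion_le_card_mul _ _ _ fun u hu => card_image_le.trans ?_
  rw [card_product]
  exact Nat.mul_le_mul (hfwd u hu) (hfwd u hu)

end SimpleGraph

/-- If `G[A]` is `d`-degenerate, the number of triangles of `G` with at least two vertices
in `A` is at most `d·|E(A, V∖A)| + d²·|A|`. -/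
theorem stmt8 {V : Type*} [Fintype V] [DecidableEq V] (G : SimpleGraph V)
    [DecidableRel G.Adj] (A : Finset V) (d : ℕ)
    (hdeg : ∀ B : Finset V, B ⊆ A → B.Nonempty →
      ∃ v ∈ B, (B.filter (G.Adj v)).card ≤ d) :
    Nat.card {s : Finset V // G.IsNClique 3 s ∧ 2 ≤ (s ∩ A).card} ≤
      d * ((A ×ˢ Aᶜ).filter fun p => G.Adj p.1 p.2).card + d ^ 2 * A.card := by
  obtain ⟨r, hr, hfwd⟩ := SimpleGraph.IsDegenerateOn.exists_rank (G := G) hdeg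
  rw [Nat.card_eq_fintype_card, Fintype.card_subtype]
  calc #(univ.filter fun s : Finset V => G.IsNClique 3 s ∧ 2 ≤ #(s ∩ A))
      ≤ #(G.crossTriangleCandidates A r ∪ G.innerTriangleCandidates A r) :=
        card_le_card fun s hs => SimpleGraph.mem_crossTriangleCandidates_union hr (mem_filter.1 hs).2.1
          (mem_filter.1 hs).2.2
    _ ≤ #(G.crossTriangleCandidates A r) + #(G.innerTriangleCandidates A r) := card_union_le _ _
    _ ≤ _ := add_le_add (SimpleGraph.card_crossTriangleCandidates_le hfwd)
        (SimpleGraph.card_innerTriangleCandidates_le hfwd)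
end

section
/- Let H be a graph with a proper 3-coloring c using colors {0,1,2} such that no vertex has a monochromatic neighborhood. Fix a vertex v_0 of color 0 and consider any maximal path v_0, v_1, ..., v_ℓ in which the color of v_i is congruent to i mod 3. Then the last vertex v_ℓ has a neighbor v_j on the path with j < ℓ and j ≡ ℓ + 1 (mod 3), yielding a cycle of length ℓ − j + 1 ≡ 0 (mod 3). -/
lemma ZMod.three_eq_add_one_or_eq_add_one {a x y : ZMod 3} (hx : x ≠ a) (hy : y ≠ a)
    (hxy : x ≠ y) : x = a + 1 ∨ y = a + 1 := by
  revert a x y; decide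

lemma SimpleGraph.exists_adj_color_eq_add_one {V : Type*} {G : SimpleGraph V} {c : V → ZMod 3}
    (hc : ∀ u v, G.Adj u v → c u ≠ c v) {v : V}
    (hv : ¬ ∀ u w : V, G.Adj v u → G.Adj v w → c u = c w) :
    ∃ u, G.Adj v u ∧ c u = c v + 1 := by
  push Not at hv
  obtain ⟨u, w, hu, hw, huw⟩ := hv
  rcases ZMod.three_eq_add_one_or_eq_add_one (hc _ _ hu).symm (hc _ _ hw).symm huw with h | h
  · exact ⟨u, hu, h⟩
  · exact ⟨w, hw, h⟩

theorem stmt10_general {V : Type*} (H : SimpleGraph V) (c : V → ZMod 3)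
    (hc : ∀ u v, H.Adj u v → c u ≠ c v)
    (hmono : ∀ v : V, ¬ ∀ u w : V, H.Adj v u → H.Adj v w → c u = c w)
    (ℓ : ℕ) (f : Fin (ℓ + 1) → V)
    (hcol : ∀ i : Fin (ℓ + 1), c (f i) = ((i : ℕ) : ZMod 3))
    (hmax : ¬ ∃ u : V, H.Adj (f (Fin.last ℓ)) u ∧ (∀ i, f i ≠ u) ∧
      c u = ((ℓ + 1 : ℕ) : ZMod 3)) :
    ∃ j : Fin (ℓ + 1), (j : ℕ) < ℓ ∧ H.Adj (f (Fin.last ℓ)) (f j) ∧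
      c (f j) = ((ℓ + 1 : ℕ) : ZMod 3) ∧ (ℓ - (j : ℕ) + 1) % 3 = 0 := by
  obtain ⟨u, hadj, hcu⟩ := H.exists_adj_color_eq_add_one hc (hmono (f (Fin.last ℓ)))
  rw [hcol, Fin.val_last, ← Nat.cast_succ] at hcu
  obtain ⟨j, rfl⟩ : ∃ j, f j = u := by
    by_contra! hoff
    exact hmax ⟨u, hadj, hoff, hcu⟩
  have hmod : (j : ℕ) % 3 = (ℓ + 1) % 3 :=
    (ZMod.natCast_eq_natCast_iff' _ _ _).mp (hcol j ▸ hcu)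
  have hjlt : (j : ℕ) < ℓ := by
    have := j.is_lt
    by_contra
    omega
  exact ⟨j, hjlt, hadj, hcu, by omega⟩

/-- Given a proper 3-coloring with no monochromatic neighborhoods and a maximal path
`v_0, …, v_ℓ` whose colors follow `i mod 3`, the last vertex has a neighbor `v_j` on the
path with `j < ℓ`, `j ≡ ℓ+1 (mod 3)`, giving a cycle length `ℓ - j + 1` divisible by 3. -/
theorem stmt10 {V : Type*} (H : SimpleGraph V) (c : V → ZMod 3)
    (hc : ∀ u v, H.Adj u v → c u ≠ c v)
    (hmono : ∀ v : V, ¬ ∀ u w : V, H.Adj v u → H.Adj v w → c u = c w)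
    (ℓ : ℕ) (f : Fin (ℓ + 1) → V) (hinj : Function.Injective f)
    (hadj : ∀ i : Fin ℓ, H.Adj (f i.castSucc) (f i.succ))
    (hcol : ∀ i : Fin (ℓ + 1), c (f i) = ((i : ℕ) : ZMod 3))
    (hmax : ¬ ∃ u : V, H.Adj (f (Fin.last ℓ)) u ∧ (∀ i, f i ≠ u) ∧
      c u = ((ℓ + 1 : ℕ) : ZMod 3)) :
    ∃ j : Fin (ℓ + 1), (j : ℕ) < ℓ ∧ H.Adj (f (Fin.last ℓ)) (f j) ∧
      c (f j) = ((ℓ + 1 : ℕ) : ZMod 3) ∧ (ℓ - (j : ℕ) + 1) % 3 = 0 :=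
  stmt10_general H c hc hmono ℓ f hcol hmax
end

section
/- Let G be a C_5-free graph and let v be a vertex of G not contained in any triangle. Suppose uw is an edge with both u and w at distance exactly 2 from v. Then u and w have a common neighbor p at distance 1 from v, and hence p, u, w form a triangle in G. -/
/-!
Let `a` be a neighbour of `v` adjacent to `u`, and `b` one adjacent to `w`. Both `a` and `b`
lie at distance one from `v` while `u` and `w` lie at distance two, so if `a ≠ b` then
`v a u w b` are five distinct vertices forming a closed walk, which is a `5`-cycle.
Hence `a = b` is a common neighbour of `u` and `w`.
-/

namespace SimpleGraph

variable {V : Type*} {G : SimpleGraph V}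

lemma exists_adj_adj_of_dist_eq_two {u v : V} (h : G.dist u v = 2) :
    ∃ w, G.Adj u w ∧ G.Adj w v := by
  have hreach : G.Reachable u v := Reachable.of_dist_ne_zero (by omega)
  have hedist : G.edist u v = 2 := by
    rw [← hreach.coe_dist_eq_edist, h]
    rfl
  obtain ⟨w, hw⟩ := (edist_eq_two_iff.mp hedist).2.2
  exact ⟨w, (G.mem_commonNeighbors.mp hw).1, (G.mem_commonNeighbors.mp hw).2.symm⟩

lemma isCycle_cons_five {a b c d e : V} (hab : G.Adj a b) (hbc : G.Adj b c) (hcd : G.Adj c d)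
    (hde : G.Adj d e) (hea : G.Adj e a) (hac : a ≠ c) (had : a ≠ d) (hbd : b ≠ d)
    (hbe : b ≠ e) (hce : c ≠ e) :
    (Walk.cons hab (.cons hbc (.cons hcd (.cons hde (.cons hea .nil))))).IsCycle := by
  rw [Walk.cons_isCycle_iff]
  simp [hab.ne, hbc.ne, hcd.ne, hde.ne, hea.ne, hea.ne.symm, hab.ne.symm, hac, had, hbd, hbe,
    hce, hac.symm, had.symm]

lemma eq_of_adj_of_dist_eq_two_of_cycle_ne_five
    (hfree : ∀ (a : V) (c : G.Walk a a), c.IsCycle → c.length ≠ 5)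
    {v u w a b : V} (huw : G.Adj u w) (hu : G.dist v u = 2) (hw : G.dist v w = 2)
    (hva : G.Adj v a) (hau : G.Adj a u) (hvb : G.Adj v b) (hbw : G.Adj b w) : a = b := by
  by_contra hab
  have hvu : v ≠ u := by rintro rfl; simp at hu
  have hvw : v ≠ w := by rintro rfl; simp at hw
  have haw : a ≠ w := by rintro rfl; rw [dist_eq_one_iff_adj.mpr hva] at hw; omega
  have hub : u ≠ b := by rintro rfl; rw [dist_eq_one_iff_adj.mpr hvb] at hu; omega
  exact hfree v _ (isCycle_cons_five hva hau huw hbw.symm hvb.symm hvu hvw haw hab hub) rfl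

end SimpleGraph

open SimpleGraph in
theorem stmt16_general {V : Type*} (G : SimpleGraph V)
    (hfree : ∀ (a : V) (c : G.Walk a a), c.IsCycle → c.length ≠ 5)
    (v : V)
    (u w : V) (huw : G.Adj u w) (hu : G.dist v u = 2) (hw : G.dist v w = 2) :
    ∃ p : V, G.dist v p = 1 ∧ G.Adj p u ∧ G.Adj p w := by
  obtain ⟨a, hva, hau⟩ := exists_adj_adj_of_dist_eq_two hu
  obtain ⟨b, hvb, hbw⟩ := exists_adj_adj_of_dist_eq_two hw
  obtain rfl := eq_of_adj_of_dist_eq_two_of_cycle_ne_five hfree huw hu hw hva hau hvb hbw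
  exact ⟨a, dist_eq_one_iff_adj.mpr hva, hau, hbw⟩

/-- In a `C_5`-free graph, if `v` is in no triangle and `uw` is an edge with both endpoints
at distance exactly 2 from `v`, then `u` and `w` have a common neighbor `p` at distance 1
from `v`, so `p, u, w` is a triangle. -/
theorem stmt16 {V : Type*} (G : SimpleGraph V)
    (hfree : ∀ (a : V) (c : G.Walk a a), c.IsCycle → c.length ≠ 5)
    (v : V) (hv : ∀ a b : V, G.Adj v a → G.Adj v b → ¬ G.Adj a b)
    (u w : V) (huw : G.Adj u w) (hu : G.dist v u = 2) (hw : G.dist v w = 2) :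
    ∃ p : V, G.dist v p = 1 ∧ G.Adj p u ∧ G.Adj p w :=
  stmt16_general G hfree v u w huw hu hw
end
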